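/- arXiv:2210.00479 — 2 statements merged into one kernel-verified Lean document; each statement's English description precedes it below -/
import Mathlib

section
/- (Strong duality for discrete optimal transport.) Let μ_s ∈ ℝ^{N_s} and μ_t ∈ ℝ^{N_t} be probability vectors and C ∈ ℝ^{N_s×N_t}. Then there exist γ* ∈ Γ(μ_s, μ_t) and a dual-feasible pair (φ*, ψ*) such that Σ_{i,j} γ*_{ij} C_{ij} = Σ_i φ*_i μ_{s,i} + Σ_j ψ*_j μ_{t,j}; consequently min_{γ ∈ Γ(μ_s,μ_t)} Σ_{i,j} γ_{ij} C_{ij} = sup over dual-feasible (φ,ψ) of Σ_i φ_i μ_{s,i} + Σ_j ψ_j μ_{t,j}. -/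
/-- A probability vector: nonnegative entries summing to 1. -/
def IsProbVec {n : ℕ} (μ : Fin n → ℝ) : Prop :=
  (∀ i, 0 ≤ μ i) ∧ ∑ i, μ i = 1

/-- The transportation polytope `Γ(μs, μt)`. -/
def transportPolytope {Ns Nt : ℕ} (μs : Fin Ns → ℝ) (μt : Fin Nt → ℝ) :
    Set (Matrix (Fin Ns) (Fin Nt) ℝ) :=
  {γ | (∀ i j, 0 ≤ γ i j) ∧ (∀ i, ∑ j, γ i j = μs i) ∧ (∀ j, ∑ i, γ i j = μt j)}

/-- A pair `(φ, ψ)` is dual feasible for the cost matrix `C` if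
`φ_i + ψ_j ≤ C_{ij}` for all `i, j`. -/
def DualFeasible {Ns Nt : ℕ} (C : Matrix (Fin Ns) (Fin Nt) ℝ)
    (φ : Fin Ns → ℝ) (ψ : Fin Nt → ℝ) : Prop :=
  ∀ i j, φ i + ψ j ≤ C i j

section OTAux
variable {Ns Nt : ℕ}

lemma ot_weak {Ns Nt : ℕ} {μs : Fin Ns → ℝ} {μt : Fin Nt → ℝ}
    {C γ : Matrix (Fin Ns) (Fin Nt) ℝ}
    {φ : Fin Ns → ℝ} {ψ : Fin Nt → ℝ}
    (hγ : γ ∈ transportPolytope μs μt) (h : DualFeasible C φ ψ) :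
    ∑ i, φ i * μs i + ∑ j, ψ j * μt j ≤ ∑ i, ∑ j, γ i j * C i j := by
  obtain ⟨hpos, hrow, hcol⟩ := hγ
  have h1 : ∀ i, φ i * μs i = ∑ j, γ i j * φ i := by
    intro i; rw [← Finset.sum_mul, hrow i, mul_comm]
  have h2 : ∀ j, ψ j * μt j = ∑ i, γ i j * ψ j := by
    intro j; rw [← Finset.sum_mul, hcol j, mul_comm]
  calc ∑ i, φ i * μs i + ∑ j, ψ j * μt j
      = ∑ i, ∑ j, γ i j * φ i + ∑ j, ∑ i, γ i j * ψ j := by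
        rw [Finset.sum_congr rfl fun i _ => h1 i, Finset.sum_congr rfl fun j _ => h2 j]
    _ = ∑ i, ∑ j, (γ i j * φ i + γ i j * ψ j) := by
        rw [Finset.sum_comm (f := fun j i => γ i j * ψ j)]
        simp only [Finset.sum_add_distrib]
    _ = ∑ i, ∑ j, γ i j * (φ i + ψ j) := by
        refine Finset.sum_congr rfl fun i _ => Finset.sum_congr rfl fun j _ => ?_
        ring
    _ ≤ ∑ i, ∑ j, γ i j * C i j := by
        refine Finset.sum_le_sum fun i _ => Finset.sum_le_sum fun j _ => ?_
        exact mul_le_mul_of_nonneg_left (h i j) (hpos i j)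

lemma otProdMem {Ns Nt : ℕ} {μs : Fin Ns → ℝ} {μt : Fin Nt → ℝ}
    (hμs : IsProbVec μs) (hμt : IsProbVec μt) :
    Matrix.of (fun i j => μs i * μt j) ∈ transportPolytope μs μt := by
  refine ⟨fun i j => mul_nonneg (hμs.1 i) (hμt.1 j), fun i => ?_, fun j => ?_⟩
  · simp [← Finset.mul_sum, hμt.2]
  · simp [← Finset.sum_mul, hμs.2]

lemma polytope_isCompact {Ns Nt : ℕ} {μs : Fin Ns → ℝ} {μt : Fin Nt → ℝ}
    (hμs : IsProbVec μs) (hμt : IsProbVec μt) :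
    IsCompact (transportPolytope μs μt) := by
  have hK : IsCompact {γ : Matrix (Fin Ns) (Fin Nt) ℝ | ∀ i, ∀ j, γ i j ∈ Set.Icc (0:ℝ) 1} := by
    have : {γ : Matrix (Fin Ns) (Fin Nt) ℝ | ∀ i, ∀ j, γ i j ∈ Set.Icc (0:ℝ) 1}
        = Set.univ.pi (fun _ : Fin Ns => Set.univ.pi fun _ : Fin Nt => Set.Icc (0:ℝ) 1) := by
      ext γ
      constructor
      · intro h
        intro i _
        intro j _
        exact h i j
      · intro h i j
        exact h i (Set.mem_univ i) j (Set.mem_univ j)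
    rw [this]
    exact isCompact_univ_pi fun i => isCompact_univ_pi fun j => isCompact_Icc
  refine hK.of_isClosed_subset ?_ ?_
  · have : transportPolytope μs μt =
        (⋂ i, ⋂ j, {γ : Matrix (Fin Ns) (Fin Nt) ℝ | 0 ≤ γ i j}) ∩
        ((⋂ i, {γ : Matrix (Fin Ns) (Fin Nt) ℝ | ∑ j, γ i j = μs i}) ∩
         (⋂ j, {γ : Matrix (Fin Ns) (Fin Nt) ℝ | ∑ i, γ i j = μt j})) := by
      ext γ
      simp only [transportPolytope, Set.mem_setOf_eq, Set.mem_inter_iff, Set.mem_iInter]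
    rw [this]
    refine IsClosed.inter ?_ (IsClosed.inter ?_ ?_)
    · exact isClosed_iInter fun i => isClosed_iInter fun j =>
        isClosed_le continuous_const (by fun_prop)
    · exact isClosed_iInter fun i => isClosed_eq (by fun_prop) continuous_const
    · exact isClosed_iInter fun j => isClosed_eq (by fun_prop) continuous_const
  · rintro γ ⟨hpos, hrow, hcol⟩ i j
    constructor
    · exact hpos i j
    · calc γ i j ≤ ∑ j', γ i j' :=
            Finset.single_le_sum (fun j' _ => hpos i j') (Finset.mem_univ j)
        _ = μs i := hrow i
        _ ≤ ∑ i', μs i' := Finset.single_le_sum (fun i' _ => hμs.1 i') (Finset.mem_univ i)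
        _ = 1 := hμs.2

lemma exists_primal_min {Ns Nt : ℕ} {μs : Fin Ns → ℝ} {μt : Fin Nt → ℝ}
    (hμs : IsProbVec μs) (hμt : IsProbVec μt) (C : Matrix (Fin Ns) (Fin Nt) ℝ) :
    ∃ γ ∈ transportPolytope μs μt, ∀ γ' ∈ transportPolytope μs μt,
      ∑ i, ∑ j, γ i j * C i j ≤ ∑ i, ∑ j, γ' i j * C i j := by
  obtain ⟨γ, hγ, hmin⟩ := (polytope_isCompact hμs hμt).exists_isMinOn
    ⟨_, otProdMem hμs hμt⟩
    (Continuous.continuousOn (f := fun γ : Matrix (Fin Ns) (Fin Nt) ℝ =>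
      ∑ i, ∑ j, γ i j * C i j) (by fun_prop))
  exact ⟨γ, hγ, fun γ' hγ' => hmin hγ'⟩

noncomputable def otMap (C : Matrix (Fin Ns) (Fin Nt) ℝ) :
    Matrix (Fin Ns) (Fin Nt) ℝ →ₗ[ℝ] (Fin Ns → ℝ) × (Fin Nt → ℝ) × ℝ where
  toFun γ := (fun i => ∑ j, γ i j, fun j => ∑ i, γ i j, ∑ i, ∑ j, γ i j * C i j)
  map_add' a b := by
    refine Prod.ext ?_ (Prod.ext ?_ ?_) <;>
      simp [Matrix.add_apply, Finset.sum_add_distrib, add_mul] <;> funext k <;>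
      simp [Finset.sum_add_distrib]
  map_smul' c a := by
    refine Prod.ext ?_ (Prod.ext ?_ ?_) <;>
      simp [Matrix.smul_apply, Finset.mul_sum, smul_eq_mul, mul_assoc] <;> funext k <;>
      simp [Finset.mul_sum, smul_eq_mul]

def otK (Ns Nt : ℕ) : Set (Matrix (Fin Ns) (Fin Nt) ℝ) := {γ | ∀ i j, 0 ≤ γ i j}



lemma otK_convex : Convex ℝ (otK Ns Nt) := by
  intro γ hγ γ' hγ' a b ha hb _
  intro i j
  have : (a • γ + b • γ') i j = a * γ i j + b * γ' i j := by
    simp [Matrix.add_apply, Matrix.smul_apply, smul_eq_mul]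
  rw [this]
  exact add_nonneg (mul_nonneg ha (hγ i j)) (mul_nonneg hb (hγ' i j))


lemma ot_not_mem_closure {μs : Fin Ns → ℝ} {μt : Fin Nt → ℝ}
    (hμs : IsProbVec μs) (C : Matrix (Fin Ns) (Fin Nt) ℝ)
    {γstar : Matrix (Fin Ns) (Fin Nt) ℝ} (hγ : γstar ∈ transportPolytope μs μt)
    (hmin : ∀ γ' ∈ transportPolytope μs μt,
      ∑ i, ∑ j, γstar i j * C i j ≤ ∑ i, ∑ j, γ' i j * C i j)
    {ε : ℝ} (hε : 0 < ε) :
    ((μs, μt, (∑ i, ∑ j, γstar i j * C i j) - ε) : (Fin Ns → ℝ) × (Fin Nt → ℝ) × ℝ)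
      ∉ closure (otMap C '' otK Ns Nt) := by
  set v := ∑ i, ∑ j, γstar i j * C i j with hv
  intro hb
  -- the open set U of points whose first component is `< μs + 1`
  set U : Set ((Fin Ns → ℝ) × (Fin Nt → ℝ) × ℝ) := {x | ∀ i, x.1 i < μs i + 1} with hU
  have hUopen : IsOpen U := by
    have : U = ⋂ i, {x : (Fin Ns → ℝ) × (Fin Nt → ℝ) × ℝ | x.1 i < μs i + 1} := by
      ext x; simp [hU]
    rw [this]
    exact isOpen_iInter_of_finite fun i =>
      isOpen_lt (by fun_prop) continuous_const
  have hbU : ((μs, μt, v - ε) : (Fin Ns → ℝ) × (Fin Nt → ℝ) × ℝ) ∈ U := by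
    intro i; simp
  -- membership in the closure of the intersection with U
  have hb2 : ((μs, μt, v - ε) : (Fin Ns → ℝ) × (Fin Nt → ℝ) × ℝ)
      ∈ closure ((otMap C '' otK Ns Nt) ∩ U) := by
    rw [mem_closure_iff] at hb ⊢
    intro O hO hbO
    obtain ⟨x, hx1, hx2⟩ := hb (O ∩ U) (hO.inter hUopen) ⟨hbO, hbU⟩
    exact ⟨x, hx1.1, hx2, hx1.2⟩
  -- the intersection is contained in the image of a compact box
  set K2 : Set (Matrix (Fin Ns) (Fin Nt) ℝ) := {γ | ∀ i j, γ i j ∈ Set.Icc (0:ℝ) 2} with hK2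
  have hK2comp : IsCompact K2 := by
    have : K2 = Set.univ.pi (fun _ : Fin Ns => Set.univ.pi fun _ : Fin Nt => Set.Icc (0:ℝ) 2) := by
      ext γ
      constructor
      · intro h i _ j _; exact h i j
      · intro h i j; exact h i (Set.mem_univ i) j (Set.mem_univ j)
    rw [this]
    exact isCompact_univ_pi fun i => isCompact_univ_pi fun j => isCompact_Icc
  have hsub : (otMap C '' otK Ns Nt) ∩ U ⊆ otMap C '' K2 := by
    rintro x ⟨⟨γ, hγK, rfl⟩, hxU⟩
    refine ⟨γ, fun i j => ⟨hγK i j, ?_⟩, rfl⟩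
    have h1 : γ i j ≤ ∑ j', γ i j' :=
      Finset.single_le_sum (fun j' _ => hγK i j') (Finset.mem_univ j)
    have h2 : (∑ j', γ i j') < μs i + 1 := hxU i
    have h3 : μs i ≤ 1 := by
      calc μs i ≤ ∑ i', μs i' := Finset.single_le_sum (fun i' _ => hμs.1 i') (Finset.mem_univ i)
        _ = 1 := hμs.2
    linarith
  have himclosed : IsClosed (otMap C '' K2) :=
    (hK2comp.image (otMap C).continuous_of_finiteDimensional).isClosed
  have : ((μs, μt, v - ε) : (Fin Ns → ℝ) × (Fin Nt → ℝ) × ℝ) ∈ otMap C '' K2 := by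
    have := closure_mono hsub hb2
    rwa [himclosed.closure_eq] at this
  obtain ⟨γ, hγK2, hfγ⟩ := this
  -- extract the components
  have hrow : ∀ i, ∑ j, γ i j = μs i := fun i => congrFun (congrArg Prod.fst hfγ) i
  have hcol : ∀ j, ∑ i, γ i j = μt j := fun j =>
    congrFun (congrArg Prod.fst (congrArg Prod.snd hfγ)) j
  have hcost : ∑ i, ∑ j, γ i j * C i j = v - ε :=
    congrArg (fun x => x.2.2) hfγ
  have hγmem : γ ∈ transportPolytope μs μt :=
    ⟨fun i j => (hγK2 i j).1, hrow, hcol⟩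
  have := hmin γ hγmem
  rw [hcost] at this
  linarith

lemma ot_approx_dual {μs : Fin Ns → ℝ} {μt : Fin Nt → ℝ}
    (hμs : IsProbVec μs) (C : Matrix (Fin Ns) (Fin Nt) ℝ)
    {γstar : Matrix (Fin Ns) (Fin Nt) ℝ} (hγ : γstar ∈ transportPolytope μs μt)
    (hmin : ∀ γ' ∈ transportPolytope μs μt,
      ∑ i, ∑ j, γstar i j * C i j ≤ ∑ i, ∑ j, γ' i j * C i j)
    {ε : ℝ} (hε : 0 < ε) :
    ∃ φ ψ, DualFeasible C φ ψ ∧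
      (∑ i, ∑ j, γstar i j * C i j) - ε < ∑ i, φ i * μs i + ∑ j, ψ j * μt j := by
  set v := ∑ i, ∑ j, γstar i j * C i j with hv
  have hb := ot_not_mem_closure hμs C hγ hmin hε
  have hSconv : Convex ℝ (closure (otMap C '' otK Ns Nt)) :=
    ((otK_convex).linear_image (otMap C)).closure
  obtain ⟨L, u, hLb, hLS⟩ := geometric_hahn_banach_point_closed hSconv isClosed_closure hb
  have h0S : (0 : (Fin Ns → ℝ) × (Fin Nt → ℝ) × ℝ) ∈ closure (otMap C '' otK Ns Nt) :=
    subset_closure ⟨0, fun i j => le_refl 0, map_zero _⟩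
  have hu0 : u < 0 := by simpa using hLS 0 h0S
  have hposS : ∀ γ ∈ otK Ns Nt, 0 ≤ L (otMap C γ) := by
    intro γ hγK
    by_contra hneg
    push_neg at hneg
    set w := L (otMap C γ) with hw
    set c : ℝ := u / w + 1 with hc
    have hcpos : 0 < c := by
      have h3 : 0 < u / w := div_pos_of_neg_of_neg hu0 hneg
      rw [hc]; linarith
    have hmem : (c • γ) ∈ otK Ns Nt := fun i j => by
      have : (c • γ) i j = c * γ i j := by simp [Matrix.smul_apply, smul_eq_mul]
      rw [this]; exact mul_nonneg hcpos.le (hγK i j)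
    have h1 : u < L (otMap C (c • γ)) :=
      hLS _ (subset_closure ⟨_, hmem, rfl⟩)
    rw [map_smul, map_smul, smul_eq_mul, ← hw] at h1
    have hwne : w ≠ 0 := ne_of_lt hneg
    have h2 : c * w = u + w := by
      rw [hc]; field_simp
    nlinarith
  set φ' : Fin Ns → ℝ := fun i => L (Pi.single i 1, 0, 0) with hφ'
  set ψ' : Fin Nt → ℝ := fun j => L (0, Pi.single j 1, 0) with hψ'
  set t : ℝ := L (0, 0, 1) with ht'
  have Lform : ∀ (x : Fin Ns → ℝ) (y : Fin Nt → ℝ) (z : ℝ),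
      L (x, y, z) = ∑ i, x i * φ' i + ∑ j, y j * ψ' j + z * t := by
    intro x y z
    have hxs : ∀ (n : ℕ) (x : Fin n → ℝ), (∑ i, x i • (Pi.single i 1 : Fin n → ℝ)) = x := by
      intro n x
      have : ∀ i, x i • (Pi.single i (1:ℝ) : Fin n → ℝ) = Pi.single i (x i) := by
        intro i; funext k; simp [Pi.single_apply, Pi.smul_apply, mul_ite]
      simp only [this, Finset.univ_sum_single]
    have hdecomp : ((x, y, z) : (Fin Ns → ℝ) × (Fin Nt → ℝ) × ℝ) =
        (∑ i, x i • (((Pi.single i 1 : Fin Ns → ℝ), (0 : Fin Nt → ℝ), (0:ℝ)) :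
          (Fin Ns → ℝ) × (Fin Nt → ℝ) × ℝ))
        + (∑ j, y j • (((0 : Fin Ns → ℝ), (Pi.single j 1 : Fin Nt → ℝ), (0:ℝ)) :
          (Fin Ns → ℝ) × (Fin Nt → ℝ) × ℝ))
        + z • (((0 : Fin Ns → ℝ), (0 : Fin Nt → ℝ), (1:ℝ)) :
          (Fin Ns → ℝ) × (Fin Nt → ℝ) × ℝ) := by
      refine Prod.ext ?_ (Prod.ext ?_ ?_)
      · simp [Prod.fst_sum, Prod.smul_fst, hxs]
      · simp [Prod.fst_sum, Prod.snd_sum, Prod.smul_snd, Prod.smul_fst, hxs]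
      · simp [Prod.snd_sum, Prod.smul_snd]
    rw [hdecomp, map_add, map_add, map_sum, map_sum, map_smul]
    simp only [map_smul, smul_eq_mul]
    rfl
  have hfeas' : ∀ i j, 0 ≤ φ' i + ψ' j + C i j * t := by
    intro i j
    have hmem : (Matrix.of fun i' j' => if i' = i ∧ j' = j then (1:ℝ) else 0) ∈ otK Ns Nt := by
      intro i' j'
      show (0:ℝ) ≤ if i' = i ∧ j' = j then (1:ℝ) else 0
      split <;> norm_num
    have h1 := hposS _ hmem
    have hcomp : otMap C (Matrix.of fun i' j' => if i' = i ∧ j' = j then (1:ℝ) else 0)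
        = ((Pi.single i 1 : Fin Ns → ℝ), (Pi.single j 1 : Fin Nt → ℝ), C i j) := by
      refine Prod.ext ?_ (Prod.ext ?_ ?_)
      · funext i'
        show (∑ j', if i' = i ∧ j' = j then (1:ℝ) else 0)
            = (Pi.single i (1:ℝ) : Fin Ns → ℝ) i'
        rw [Pi.single_apply]
        by_cases h : i' = i <;> simp [h, Finset.sum_ite_eq']
      · funext j'
        show (∑ i', if i' = i ∧ j' = j then (1:ℝ) else 0)
            = (Pi.single j (1:ℝ) : Fin Nt → ℝ) j'
        rw [Pi.single_apply]
        by_cases h : j' = j <;> simp [h, Finset.sum_ite_eq']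
      · show (∑ i', ∑ j', (if i' = i ∧ j' = j then (1:ℝ) else 0) * C i' j') = C i j
        rw [Finset.sum_eq_single i, Finset.sum_eq_single j]
        · simp
        · intro b _ hb; simp [hb]
        · simp
        · intro b _ hb
          rw [Finset.sum_eq_zero]
          intro j' _
          simp [hb]
        · simp
    rw [hcomp, Lform] at h1
    have e1 : ∑ i', (Pi.single i (1:ℝ) : Fin Ns → ℝ) i' * φ' i' = φ' i := by
      simp [Pi.single_apply, ite_mul]
    have e2 : ∑ j', (Pi.single j (1:ℝ) : Fin Nt → ℝ) j' * ψ' j' = ψ' j := by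
      simp [Pi.single_apply, ite_mul]
    rw [e1, e2] at h1
    exact h1
  have hLbval : ∑ i, μs i * φ' i + ∑ j, μt j * ψ' j + (v - ε) * t < u := by
    have := hLb
    rw [show (∑ i, ∑ j, γstar i j * C i j - ε) = v - ε from rfl] at this
    rwa [Lform] at this
  have ht : 0 < t := by
    by_contra h
    push_neg at h
    have h1 : 0 ≤ L (otMap C γstar) := hposS _ (fun i j => hγ.1 i j)
    have hγcomp : otMap C γstar = ((μs, μt, v) : (Fin Ns → ℝ) × (Fin Nt → ℝ) × ℝ) := by
      refine Prod.ext (funext fun i => hγ.2.1 i) (Prod.ext (funext fun j => hγ.2.2 j) rfl)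
    rw [hγcomp, Lform] at h1
    have hεt : ε * t ≤ 0 := mul_nonpos_of_nonneg_of_nonpos hε.le h
    nlinarith
  refine ⟨fun i => -φ' i / t, fun j => -ψ' j / t, ?_, ?_⟩
  · intro i j
    have h1 := hfeas' i j
    have : -φ' i / t + -ψ' j / t = (-(φ' i + ψ' j)) / t := by ring
    rw [this, div_le_iff₀ ht]
    linarith
  · have e1 : ∑ i, (-φ' i / t) * μs i = -(∑ i, μs i * φ' i) / t := by
      rw [neg_div, Finset.sum_div, ← Finset.sum_neg_distrib]
      exact Finset.sum_congr rfl fun i _ => by ring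
    have e2 : ∑ j, (-ψ' j / t) * μt j = -(∑ j, μt j * ψ' j) / t := by
      rw [neg_div, Finset.sum_div, ← Finset.sum_neg_distrib]
      exact Finset.sum_congr rfl fun j _ => by ring
    rw [e1, e2, ← add_div, lt_div_iff₀ ht]
    nlinarith

lemma ot_dual_attain {μs : Fin Ns → ℝ} {μt : Fin Nt → ℝ}
    (hμs : IsProbVec μs) (hμt : IsProbVec μt) (C : Matrix (Fin Ns) (Fin Nt) ℝ) (v : ℝ)
    (happrox : ∀ ε : ℝ, 0 < ε → ∃ φ ψ, DualFeasible C φ ψ ∧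
      v - ε < ∑ i, φ i * μs i + ∑ j, ψ j * μt j)
    (hub : ∀ φ ψ, DualFeasible C φ ψ → ∑ i, φ i * μs i + ∑ j, ψ j * μt j ≤ v) :
    ∃ φ ψ, DualFeasible C φ ψ ∧ ∑ i, φ i * μs i + ∑ j, ψ j * μt j = v := by
  have hNs : Nonempty (Fin Ns) := by
    rcases Nat.eq_zero_or_pos Ns with h | h
    · subst h; simpa using hμs.2
    · exact ⟨⟨0, h⟩⟩
  have hNt : Nonempty (Fin Nt) := by
    rcases Nat.eq_zero_or_pos Nt with h | h
    · subst h; simpa using hμt.2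
    · exact ⟨⟨0, h⟩⟩
  set M : ℝ := ∑ i, ∑ j, |C i j| with hM
  have hMC : ∀ i j, |C i j| ≤ M := by
    intro i j
    calc |C i j| ≤ ∑ j', |C i j'| :=
          Finset.single_le_sum (f := fun j' => |C i j'|)
            (fun j' _ => abs_nonneg _) (Finset.mem_univ j)
      _ ≤ M := Finset.single_le_sum
          (f := fun i => ∑ j', |C i j'|)
          (fun i' _ => Finset.sum_nonneg fun j' _ => abs_nonneg _) (Finset.mem_univ i)
  have hM0 : 0 ≤ M := le_trans (abs_nonneg _) (hMC (Classical.arbitrary _) (Classical.arbitrary _))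
  set R : ℝ := 3 * M with hR
  set i0 : Fin Ns := Classical.arbitrary _ with hi0
  -- improvement step
  have improve : ∀ φ ψ, DualFeasible C φ ψ → ∃ φ2 ψ2, DualFeasible C φ2 ψ2 ∧
      (∀ i, |φ2 i| ≤ R) ∧ (∀ j, |ψ2 j| ≤ R) ∧
      ∑ i, φ i * μs i + ∑ j, ψ j * μt j ≤ ∑ i, φ2 i * μs i + ∑ j, ψ2 j * μt j := by
    intro φ ψ hfeas
    set ψ1 : Fin Nt → ℝ := fun j => Finset.univ.inf' (Finset.univ_nonempty) (fun i => C i j - φ i)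
      with hψ1
    have hψ1le : ∀ i j, ψ1 j ≤ C i j - φ i := fun i j =>
      Finset.inf'_le _ (Finset.mem_univ i)
    have hψ1ge : ∀ j, ψ j ≤ ψ1 j := fun j =>
      Finset.le_inf' _ _ fun i _ => by linarith [hfeas i j]
    set φ1 : Fin Ns → ℝ := fun i => Finset.univ.inf' (Finset.univ_nonempty) (fun j => C i j - ψ1 j)
      with hφ1
    have hφ1le : ∀ i j, φ1 i ≤ C i j - ψ1 j := fun i j =>
      Finset.inf'_le _ (Finset.mem_univ j)
    have hφ1ge : ∀ i, φ i ≤ φ1 i := fun i =>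
      Finset.le_inf' _ _ fun j _ => by linarith [hψ1le i j]
    refine ⟨fun i => φ1 i - φ1 i0, fun j => ψ1 j + φ1 i0, ?_, ?_, ?_, ?_⟩
    · intro i j
      show φ1 i - φ1 i0 + (ψ1 j + φ1 i0) ≤ C i j
      have := hφ1le i j
      linarith
    · -- |φ1 i - φ1 i0| ≤ R
      intro i
      obtain ⟨j1, _, hj1⟩ := Finset.exists_mem_eq_inf' (Finset.univ_nonempty)
        (fun j => C i0 j - ψ1 j)
      obtain ⟨j2, _, hj2⟩ := Finset.exists_mem_eq_inf' (Finset.univ_nonempty)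
        (fun j => C i j - ψ1 j)
      show |φ1 i - φ1 i0| ≤ R
      rw [abs_le]
      constructor
      · -- lower bound : φ1 i - φ1 i0 ≥ C i j2 - C i0 j2 ≥ -2M
        have h1 : φ1 i = C i j2 - ψ1 j2 := hj2
        have h2 : φ1 i0 ≤ C i0 j2 - ψ1 j2 := hφ1le i0 j2
        have := abs_le.mp (hMC i j2)
        have := abs_le.mp (hMC i0 j2)
        rw [hR]; linarith
      · have h1 : φ1 i0 = C i0 j1 - ψ1 j1 := hj1
        have h2 : φ1 i ≤ C i j1 - ψ1 j1 := hφ1le i j1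
        have := abs_le.mp (hMC i j1)
        have := abs_le.mp (hMC i0 j1)
        rw [hR]; linarith
    · -- |ψ1 j + φ1 i0| ≤ R
      intro j
      obtain ⟨j1, _, hj1⟩ := Finset.exists_mem_eq_inf' (Finset.univ_nonempty)
        (fun j => C i0 j - ψ1 j)
      obtain ⟨i2, _, hi2⟩ := Finset.exists_mem_eq_inf' (Finset.univ_nonempty)
        (fun i => C i j - φ i)
      show |ψ1 j + φ1 i0| ≤ R
      rw [abs_le]
      constructor
      · -- lower: ψ1 j + φ1 i0 = ψ1 j - ψ1 j1 + C i0 j1 ≥ -3M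
        have h1 : φ1 i0 = C i0 j1 - ψ1 j1 := hj1
        have h2 : ψ1 j = C i2 j - φ i2 := hi2
        have h3 : ψ1 j1 ≤ C i2 j1 - φ i2 := hψ1le i2 j1
        have := abs_le.mp (hMC i2 j)
        have := abs_le.mp (hMC i2 j1)
        have := abs_le.mp (hMC i0 j1)
        rw [hR]; linarith
      · have h2 : φ1 i0 ≤ C i0 j - ψ1 j := hφ1le i0 j
        have := abs_le.mp (hMC i0 j)
        rw [hR]; linarith
    · -- value only increases
      show ∑ i, φ i * μs i + ∑ j, ψ j * μt j
          ≤ ∑ i, (φ1 i - φ1 i0) * μs i + ∑ j, (ψ1 j + φ1 i0) * μt j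
      have e1 : ∑ i, (φ1 i - φ1 i0) * μs i = (∑ i, φ1 i * μs i) - φ1 i0 := by
        simp only [sub_mul]
        rw [Finset.sum_sub_distrib, ← Finset.mul_sum, hμs.2, mul_one]
      have e2 : ∑ j, (ψ1 j + φ1 i0) * μt j = (∑ j, ψ1 j * μt j) + φ1 i0 := by
        simp only [add_mul]
        rw [Finset.sum_add_distrib, ← Finset.mul_sum, hμt.2, mul_one]
      have h1 : ∑ i, φ i * μs i ≤ ∑ i, φ1 i * μs i :=
        Finset.sum_le_sum fun i _ => mul_le_mul_of_nonneg_right (hφ1ge i) (hμs.1 i)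
      have h2 : ∑ j, ψ j * μt j ≤ ∑ j, ψ1 j * μt j :=
        Finset.sum_le_sum fun j _ => mul_le_mul_of_nonneg_right (hψ1ge j) (hμt.1 j)
      rw [e1, e2]
      linarith
  -- the compact feasible dual set
  set D : Set ((Fin Ns → ℝ) × (Fin Nt → ℝ)) :=
    {p | DualFeasible C p.1 p.2 ∧ (∀ i, |p.1 i| ≤ R) ∧ (∀ j, |p.2 j| ≤ R)} with hD
  have hDclosed : IsClosed D := by
    have hDeq : D = (⋂ i, ⋂ j,
        {p : (Fin Ns → ℝ) × (Fin Nt → ℝ) | p.1 i + p.2 j ≤ C i j}) ∩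
        ((⋂ i, {p : (Fin Ns → ℝ) × (Fin Nt → ℝ) | |p.1 i| ≤ R}) ∩
         (⋂ j, {p : (Fin Ns → ℝ) × (Fin Nt → ℝ) | |p.2 j| ≤ R})) := by
      ext p
      simp only [hD, Set.mem_setOf_eq, Set.mem_inter_iff, Set.mem_iInter, DualFeasible]
    rw [hDeq]
    refine (isClosed_iInter fun i => isClosed_iInter fun j =>
        isClosed_le (by fun_prop) continuous_const).inter
      ((isClosed_iInter fun i =>
          isClosed_le (Continuous.abs (by fun_prop)) continuous_const).inter
       (isClosed_iInter fun j =>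
          isClosed_le (Continuous.abs (by fun_prop)) continuous_const))
  have hDcompact : IsCompact D := by
    have hbox : IsCompact ((Set.univ.pi fun _ : Fin Ns => Set.Icc (-R) R) ×ˢ
        (Set.univ.pi fun _ : Fin Nt => Set.Icc (-R) R)) :=
      (isCompact_univ_pi fun _ => isCompact_Icc).prod
        (isCompact_univ_pi fun _ => isCompact_Icc)
    refine hbox.of_isClosed_subset hDclosed ?_
    rintro p ⟨_, h1, h2⟩
    refine ⟨fun i _ => ?_, fun j _ => ?_⟩
    · exact Set.mem_Icc.mpr (abs_le.mp (h1 i))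
    · exact Set.mem_Icc.mpr (abs_le.mp (h2 j))
  have hDne : D.Nonempty := by
    have hfeas0 : DualFeasible C (fun _ => -M) (fun _ => 0) := by
      intro i j
      have := (abs_le.mp (hMC i j)).1
      simp only []
      linarith
    obtain ⟨φ2, ψ2, hf, hb1, hb2, _⟩ := improve _ _ hfeas0
    exact ⟨(φ2, ψ2), hf, hb1, hb2⟩
  obtain ⟨p, hpD, hpmax⟩ := hDcompact.exists_isMaxOn hDne
    (Continuous.continuousOn (show Continuous fun p : (Fin Ns → ℝ) × (Fin Nt → ℝ) =>
      ∑ i, p.1 i * μs i + ∑ j, p.2 j * μt j by fun_prop))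
  refine ⟨p.1, p.2, hpD.1, ?_⟩
  have hle : ∑ i, p.1 i * μs i + ∑ j, p.2 j * μt j ≤ v := hub _ _ hpD.1
  have hge : v ≤ ∑ i, p.1 i * μs i + ∑ j, p.2 j * μt j := by
    by_contra hcon
    push_neg at hcon
    obtain ⟨φ, ψ, hfeas, hval⟩ := happrox
      (v - (∑ i, p.1 i * μs i + ∑ j, p.2 j * μt j)) (by linarith)
    obtain ⟨φ2, ψ2, hf2, hb1, hb2, hmono⟩ := improve φ ψ hfeas
    have hmax := hpmax (show (φ2, ψ2) ∈ D from ⟨hf2, hb1, hb2⟩)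
    simp only [Set.mem_setOf_eq] at hmax
    linarith
  linarith

end OTAux


/-- Strong duality for discrete optimal transport: there exist a coupling
`γ*` ... -/
theorem discrete_ot_strong_duality {Ns Nt : ℕ}
    (μs : Fin Ns → ℝ) (μt : Fin Nt → ℝ)
    (hμs : IsProbVec μs) (hμt : IsProbVec μt)
    (C : Matrix (Fin Ns) (Fin Nt) ℝ) :
    ∃ γstar ∈ transportPolytope μs μt, ∃ φstar : Fin Ns → ℝ, ∃ ψstar : Fin Nt → ℝ,
      DualFeasible C φstar ψstar ∧
      ∑ i, ∑ j, γstar i j * C i j = ∑ i, φstar i * μs i + ∑ j, ψstar j * μt j ∧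
      (∀ γ ∈ transportPolytope μs μt,
        ∑ i, ∑ j, γstar i j * C i j ≤ ∑ i, ∑ j, γ i j * C i j) ∧
      (∀ φ : Fin Ns → ℝ, ∀ ψ : Fin Nt → ℝ, DualFeasible C φ ψ →
        ∑ i, φ i * μs i + ∑ j, ψ j * μt j ≤
          ∑ i, φstar i * μs i + ∑ j, ψstar j * μt j) := by
  obtain ⟨γstar, hγ, hmin⟩ := exists_primal_min hμs hμt C
  have happrox : ∀ ε : ℝ, 0 < ε → ∃ φ ψ, DualFeasible C φ ψ ∧
      (∑ i, ∑ j, γstar i j * C i j) - ε < ∑ i, φ i * μs i + ∑ j, ψ j * μt j :=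
    fun ε hε => ot_approx_dual hμs C hγ hmin hε
  have hub : ∀ φ ψ, DualFeasible C φ ψ →
      ∑ i, φ i * μs i + ∑ j, ψ j * μt j ≤ ∑ i, ∑ j, γstar i j * C i j :=
    fun φ ψ h => ot_weak hγ h
  obtain ⟨φstar, ψstar, hfeas, hval⟩ := ot_dual_attain hμs hμt C _ happrox hub
  refine ⟨γstar, hγ, φstar, ψstar, hfeas, hval.symm, hmin, ?_⟩
  intro φ ψ h
  rw [hval]
  exact ot_weak hγ h
end

section
/- (Sparsity of the optimal transport plan.) Let μ_s ∈ ℝ^{N_s} and μ_t ∈ ℝ^{N_t} be probability vectors. Every extreme point γ of the transportation polytope Γ(μ_s, μ_t) has at most N_s + N_t − 1 nonzero entries, i.e. the cardinality of {(i, j) : γ_{ij} ≠ 0} is at most N_s + N_t − 1. In particular, for any cost matrix C ∈ ℝ^{N_s×N_t} there exists an optimal transport plan γ* minimizing Σ_{i,j} γ_{ij} C_{ij} over Γ(μ_s, μ_t) whose support has cardinality at most N_s + N_t − 1. -/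
open Finset in
/-- Perturbation lemma: at an extreme point, any "direction" supported on the support
of `γ` with zero row and column sums must vanish. -/
lemma perturb_zero {Ns Nt : ℕ} {μs : Fin Ns → ℝ} {μt : Fin Nt → ℝ}
    {γ : Matrix (Fin Ns) (Fin Nt) ℝ}
    (hγ : γ ∈ Set.extremePoints ℝ (transportPolytope μs μt))
    (d : Matrix (Fin Ns) (Fin Nt) ℝ)
    (hsupp : ∀ i j, d i j ≠ 0 → γ i j ≠ 0)
    (hrow : ∀ i, ∑ j, d i j = 0) (hcol : ∀ j, ∑ i, d i j = 0) : d = 0 := by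
  classical
  obtain ⟨⟨hpos, hr, hc⟩, hext⟩ := hγ
  by_contra hd
  -- there is a nonzero entry
  have hFne : (Finset.univ.filter fun p : Fin Ns × Fin Nt => d p.1 p.2 ≠ 0).Nonempty := by
    by_contra h
    apply hd
    ext i j
    simp only [Matrix.zero_apply]
    by_contra hij
    exact h ⟨(i, j), by simp [hij]⟩
  set F := Finset.univ.filter fun p : Fin Ns × Fin Nt => d p.1 p.2 ≠ 0 with hF
  set ε := F.inf' hFne fun p => γ p.1 p.2 / |d p.1 p.2| with hεdef
  have hγpos : ∀ p ∈ F, 0 < γ p.1 p.2 := by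
    intro p hp
    rw [hF, Finset.mem_filter] at hp
    exact lt_of_le_of_ne (hpos p.1 p.2) (Ne.symm (hsupp _ _ hp.2))
  have hε : 0 < ε := by
    rw [hεdef, Finset.lt_inf'_iff]
    intro p hp
    have h2 : d p.1 p.2 ≠ 0 := by
      rw [hF, Finset.mem_filter] at hp; exact hp.2
    exact div_pos (hγpos p hp) (abs_pos.2 h2)
  have hbound : ∀ i j, ε * |d i j| ≤ γ i j := by
    intro i j
    by_cases h : d i j = 0
    · simp [h, hpos i j]
    · have hm : (i, j) ∈ F := by simp [hF, h]
      have := Finset.inf'_le (fun p : Fin Ns × Fin Nt => γ p.1 p.2 / |d p.1 p.2|) hm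
      rw [← hεdef] at this
      calc ε * |d i j| ≤ (γ i j / |d i j|) * |d i j| := by
            exact mul_le_mul_of_nonneg_right this (abs_nonneg _)
        _ = γ i j := div_mul_cancel₀ _ (abs_ne_zero.2 h)
  have hx : γ - ε • d ∈ transportPolytope μs μt := by
    refine ⟨fun i j => ?_, fun i => ?_, fun j => ?_⟩
    · have := hbound i j
      have h2 : ε * d i j ≤ ε * |d i j| :=
        mul_le_mul_of_nonneg_left (le_abs_self _) hε.le
      simp only [Matrix.sub_apply, Matrix.smul_apply, smul_eq_mul]
      linarith
    · simp [Finset.sum_sub_distrib, ← Finset.mul_sum, hrow, hr i]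
    · simp [Finset.sum_sub_distrib, ← Finset.mul_sum, hcol, hc j]
  have hy : γ + ε • d ∈ transportPolytope μs μt := by
    refine ⟨fun i j => ?_, fun i => ?_, fun j => ?_⟩
    · have := hbound i j
      have h2 : ε * (-d i j) ≤ ε * |d i j| :=
        mul_le_mul_of_nonneg_left (neg_le_abs _) hε.le
      simp only [Matrix.add_apply, Matrix.smul_apply, smul_eq_mul]
      linarith
    · simp [Finset.sum_add_distrib, ← Finset.mul_sum, hrow, hr i]
    · simp [Finset.sum_add_distrib, ← Finset.mul_sum, hcol, hc j]
  have hseg : γ ∈ openSegment ℝ (γ - ε • d) (γ + ε • d) := by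
    refine ⟨1/2, 1/2, by norm_num, by norm_num, by norm_num, ?_⟩
    module
  obtain h1 := hext hx hy hseg
  have hz : ε • d = 0 := sub_eq_self.1 h1
  exact hd (by simpa [hε.ne'] using hz)

open Finset in
lemma sparse_extreme {Ns Nt : ℕ} {μs : Fin Ns → ℝ} {μt : Fin Nt → ℝ}
    (hμs : IsProbVec μs) (γ : Matrix (Fin Ns) (Fin Nt) ℝ)
    (hγ : γ ∈ Set.extremePoints ℝ (transportPolytope μs μt)) :
    {p : Fin Ns × Fin Nt | γ p.1 p.2 ≠ 0}.ncard ≤ Ns + Nt - 1 := by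
  classical
  have hNs : 0 < Ns := by
    rcases Nat.eq_zero_or_pos Ns with h | h
    · exfalso; have := hμs.2; subst h; simpa using this
    · exact h
  set S : Set (Fin Ns × Fin Nt) := {p | γ p.1 p.2 ≠ 0} with hS
  set T : Finset (Fin Ns × Fin Nt) := Finset.univ.filter (fun p => γ p.1 p.2 ≠ 0) with hT
  have hST : S.ncard = T.card := by
    rw [Set.ncard_eq_toFinset_card']
    congr 1
    ext p
    simp [hS, hT]
  let φ : ((Fin Ns → ℝ) × (Fin Nt → ℝ)) →ₗ[ℝ] ℝ :=
    { toFun := fun x => (∑ i, x.1 i) - (∑ j, x.2 j)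
      map_add' := by
        intro x y
        simp [Prod.fst_add, Prod.snd_add, Finset.sum_add_distrib]
        ring
      map_smul' := by
        intro c x
        simp [Prod.smul_fst, Prod.smul_snd, ← Finset.mul_sum]
        ring }
  set K := LinearMap.ker φ with hK
  -- dimension of the kernel
  have hrange : LinearMap.range φ = ⊤ := by
    rw [LinearMap.range_eq_top]
    intro r
    refine ⟨(Pi.single ⟨0, hNs⟩ r, 0), ?_⟩
    simp [φ, Finset.sum_pi_single']
  have hdimE : Module.finrank ℝ ((Fin Ns → ℝ) × (Fin Nt → ℝ)) = Ns + Nt := by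
    simp
  have hdimK : Module.finrank ℝ K = Ns + Nt - 1 := by
    have := LinearMap.finrank_range_add_finrank_ker φ
    rw [hrange, hdimE] at this
    simp only [finrank_top, Module.finrank_self] at this
    rw [hK]
    omega
  -- the family of marginal vectors indexed by the support
  have hker : ∀ p : Fin Ns × Fin Nt,
      ((fun i => if p.1 = i then (1:ℝ) else 0, fun j => if p.2 = j then (1:ℝ) else 0) : (Fin Ns → ℝ) × (Fin Nt → ℝ)) ∈ K := by
    intro p
    simp [hK, LinearMap.mem_ker, φ, Finset.sum_ite_eq]
  let w : Fin Ns × Fin Nt → K := fun p =>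
    ⟨(fun i => if p.1 = i then (1:ℝ) else 0, fun j => if p.2 = j then (1:ℝ) else 0), hker p⟩
  have hli : LinearIndependent ℝ (fun p : ↥T => w p.1) := by
    rw [Fintype.linearIndependent_iff]
    intro g hg p
    set G : Fin Ns × Fin Nt → ℝ := fun q => if h : q ∈ T then g ⟨q, h⟩ else 0 with hGdef
    have hgG : ∀ q : ↥T, g q = G q.1 := by
      intro q; rw [hGdef]; simp [q.2]
    have hsum : ∑ q : Fin Ns × Fin Nt, G q • w q = 0 := by
      rw [← Finset.sum_subset (Finset.subset_univ T)
        (by intro q _ hq; rw [hGdef]; simp [hq])]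
      rw [← Finset.sum_coe_sort T (fun q => G q • w q)]
      rw [← hg]
      exact Finset.sum_congr rfl fun q _ => by rw [hgG]
    -- pass to the ambient space
    have hsumE : ∑ q : Fin Ns × Fin Nt, G q •
        ((fun i => if q.1 = i then (1:ℝ) else 0, fun j => if q.2 = j then (1:ℝ) else 0) : (Fin Ns → ℝ) × (Fin Nt → ℝ))
        = 0 := by
      have := congrArg (Subtype.val : K → (Fin Ns → ℝ) × (Fin Nt → ℝ)) hsum
      rw [AddSubmonoidClass.coe_finset_sum] at this
      simpa [w] using this
    -- the perturbation matrix
    set d : Matrix (Fin Ns) (Fin Nt) ℝ := Matrix.of fun i j => G (i, j) with hd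
    have hrowd : ∀ i, ∑ j, d i j = 0 := by
      intro i
      have h1 := congrFun (congrArg Prod.fst hsumE) i
      simp only [Prod.fst_sum, Finset.sum_apply, Prod.smul_fst, Pi.smul_apply,
        smul_eq_mul, mul_ite, mul_one, mul_zero, Prod.fst_zero, Pi.zero_apply] at h1
      rw [Fintype.sum_prod_type, Finset.sum_comm] at h1
      simp only [Finset.sum_ite_eq', Finset.mem_univ, if_true] at h1
      simpa [hd] using h1
    have hcold : ∀ j, ∑ i, d i j = 0 := by
      intro j
      have h1 := congrFun (congrArg Prod.snd hsumE) j
      simp only [Prod.snd_sum, Finset.sum_apply, Prod.smul_snd, Pi.smul_apply,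
        smul_eq_mul, mul_ite, mul_one, mul_zero, Prod.snd_zero, Pi.zero_apply] at h1
      rw [Fintype.sum_prod_type_right, Finset.sum_comm] at h1
      simp only [Finset.sum_ite_eq', Finset.mem_univ, if_true] at h1
      simpa [hd] using h1
    have hsuppd : ∀ i j, d i j ≠ 0 → γ i j ≠ 0 := by
      intro i j hij
      rw [hd] at hij
      simp only [Matrix.of_apply, hGdef] at hij
      by_contra hγij
      have : (i, j) ∉ T := by simp [hT, hγij]
      simp [this] at hij
    have hd0 : d = 0 := perturb_zero hγ d hsuppd hrowd hcold
    have : G p.1 = 0 := by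
      have := congrFun (congrFun hd0 p.1.1) p.1.2
      simpa [hd] using this
    rw [hgG p, this]
  have hcard := hli.fintype_card_le_finrank
  rw [hdimK, Fintype.card_coe] at hcard
  rw [hST]
  exact hcard

open Finset in
/-- Sparsity of optimal transport plans: every extreme point of the transportation
polytope has at most `Ns + Nt - 1` nonzero entries, and for any cost matrix `C`
there is an optimal transport plan whose support has at most `Ns + Nt - 1` elements. -/
theorem transportPolytope_extremePoint_sparse {Ns Nt : ℕ}
    (μs : Fin Ns → ℝ) (μt : Fin Nt → ℝ)
    (hμs : IsProbVec μs) (hμt : IsProbVec μt) :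
    (∀ γ ∈ Set.extremePoints ℝ (transportPolytope μs μt),
        {p : Fin Ns × Fin Nt | γ p.1 p.2 ≠ 0}.ncard ≤ Ns + Nt - 1) ∧
      ∀ C : Matrix (Fin Ns) (Fin Nt) ℝ,
        ∃ γstar ∈ transportPolytope μs μt,
          (∀ γ ∈ transportPolytope μs μt,
            ∑ i, ∑ j, γstar i j * C i j ≤ ∑ i, ∑ j, γ i j * C i j) ∧
          {p : Fin Ns × Fin Nt | γstar p.1 p.2 ≠ 0}.ncard ≤ Ns + Nt - 1 := by
  classical
  refine ⟨fun γ hγ => sparse_extreme hμs γ hγ, fun C => ?_⟩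
  set P := transportPolytope μs μt with hP
  -- nonempty
  have hPne : P.Nonempty := by
    refine ⟨Matrix.of fun i j => μs i * μt j, fun i j => mul_nonneg (hμs.1 i) (hμt.1 j),
      fun i => ?_, fun j => ?_⟩
    · simp [← Finset.mul_sum, hμt.2]
    · simp [← Finset.sum_mul, hμs.2]
  -- closed
  have hPclosed : IsClosed P := by
    have hrepr : P = (⋂ i, ⋂ j, {γ : Matrix (Fin Ns) (Fin Nt) ℝ | 0 ≤ γ i j}) ∩
        ((⋂ i, {γ : Matrix (Fin Ns) (Fin Nt) ℝ | ∑ j, γ i j = μs i}) ∩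
         (⋂ j, {γ : Matrix (Fin Ns) (Fin Nt) ℝ | ∑ i, γ i j = μt j})) := by
      ext γ
      simp only [hP, transportPolytope, Set.mem_setOf_eq, Set.mem_inter_iff, Set.mem_iInter]
    rw [hrepr]
    refine IsClosed.inter ?_ (IsClosed.inter ?_ ?_)
    · exact isClosed_iInter fun i => isClosed_iInter fun j =>
        isClosed_le continuous_const ((continuous_apply j).comp (continuous_apply i))
    · exact isClosed_iInter fun i => isClosed_eq
        (continuous_finset_sum _ fun j _ => (continuous_apply j).comp (continuous_apply i))
        continuous_const
    · exact isClosed_iInter fun j => isClosed_eq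
        (continuous_finset_sum _ fun i _ => (continuous_apply j).comp (continuous_apply i))
        continuous_const
  -- bounded (inside a compact box)
  have hPbd : P ⊆ Set.univ.pi fun _ : Fin Ns => Set.univ.pi fun _ : Fin Nt =>
      Set.Icc (0:ℝ) 1 := by
    rintro γ ⟨hpos, hr, hc⟩
    refine Set.mem_univ_pi.2 ?_
    intro i
    rw [Set.mem_univ_pi]
    intro j
    refine ⟨hpos i j, ?_⟩
    calc γ i j ≤ ∑ j', γ i j' := Finset.single_le_sum (fun j' _ => hpos i j') (mem_univ j)
      _ = μs i := hr i
      _ ≤ ∑ i', μs i' := Finset.single_le_sum (fun i' _ => hμs.1 i') (mem_univ i)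
      _ = 1 := hμs.2
  have hPcomp : IsCompact P :=
    (isCompact_univ_pi fun _ => isCompact_univ_pi fun _ => isCompact_Icc).of_isClosed_subset
      hPclosed hPbd
  -- the linear objective
  set f : Matrix (Fin Ns) (Fin Nt) ℝ → ℝ := fun γ => ∑ i, ∑ j, γ i j * C i j with hf
  have hf_cont : Continuous f :=
    continuous_finset_sum _ fun i _ => continuous_finset_sum _ fun j _ =>
      (Continuous.mul (f := fun γ : Matrix (Fin Ns) (Fin Nt) ℝ => γ i j) ((continuous_apply j).comp (continuous_apply i)) continuous_const)
  have hf_lin : ∀ (a b : ℝ) (x y : Matrix (Fin Ns) (Fin Nt) ℝ),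
      f (a • x + b • y) = a * f x + b * f y := by
    intro a b x y
    simp [hf, Matrix.add_apply, Matrix.smul_apply, smul_eq_mul, add_mul,
      Finset.sum_add_distrib, Finset.mul_sum, mul_assoc]
  obtain ⟨γm, hγmP, hγm⟩ := hPcomp.exists_isMinOn hPne hf_cont.continuousOn
  have hmin : ∀ γ ∈ P, f γm ≤ f γ := fun γ hγ' => isMinOn_iff.1 hγm γ hγ'
  -- the set of minimizers
  set F : Set (Matrix (Fin Ns) (Fin Nt) ℝ) := P ∩ {γ | f γ = f γm} with hFdef
  have hFclosed : IsClosed F := hPclosed.inter (isClosed_eq hf_cont continuous_const)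
  have hFcomp : IsCompact F := hPcomp.of_isClosed_subset hFclosed Set.inter_subset_left
  have hFne : F.Nonempty := ⟨γm, hγmP, rfl⟩
  letI : LocallyConvexSpace ℝ (Matrix (Fin Ns) (Fin Nt) ℝ) :=
    inferInstanceAs (LocallyConvexSpace ℝ (Fin Ns → Fin Nt → ℝ))
  obtain ⟨γe, hγe⟩ := hFcomp.extremePoints_nonempty hFne
  have hγeP : γe ∈ P := hγe.1.1
  have hγef : f γe = f γm := hγe.1.2
  have hext : γe ∈ Set.extremePoints ℝ P := by
    refine ⟨hγeP, ?_⟩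
    intro x hx y hy hseg
    obtain ⟨a, b, ha, hb, hab, habeq⟩ := hseg
    have hfx := hmin x hx
    have hfy := hmin y hy
    have hfe : a * f x + b * f y = f γm := by rw [← hf_lin a b x y, habeq, hγef]
    have hm : a * f γm + b * f γm = f γm := by rw [← add_mul, hab, one_mul]
    have hfx' : f x = f γm := by
      refine le_antisymm (le_of_mul_le_mul_left ?_ ha) hfx
      have h1 : b * f γm ≤ b * f y := mul_le_mul_of_nonneg_left hfy hb.le
      linarith
    have hfy' : f y = f γm := by
      refine le_antisymm (le_of_mul_le_mul_left ?_ hb) hfy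
      have h1 : a * f γm ≤ a * f x := mul_le_mul_of_nonneg_left hfx ha.le
      linarith
    exact hγe.2 ⟨hx, hfx'⟩ ⟨hy, hfy'⟩ ⟨a, b, ha, hb, hab, habeq⟩
  refine ⟨γe, hγeP, fun γ hγ' => ?_, sparse_extreme hμs γe hext⟩
  show f γe ≤ f γ
  rw [hγef]
  exact hmin γ hγ'
end
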